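/- arXiv:2002.06628 — 2 statements merged into one kernel-verified Lean document; each statement's English description precedes it below -/
import Mathlib

section
/- In the additive fitness model, conditional on G_{t-1} and the fitness ξ_t of the entering node, the expected change in attachment probability of node i equals E[p_i^{AF}(t+1) − p_i^{AF}(t) | G_{t-1}, ξ_t] = − (ξ_i + D_{t-1}(i))(ξ_t + 1) / ((Ξ_{t-1} + 2(t-1))(Ξ_t + 2t)), where Ξ_t = ∑_{j ∈ V_t} ξ_j. -/
open Finset

/- With weights `w ℓ = ξ ℓ + D ℓ` and total weight `A = Ξ_{t-1} + 2(t-1)`, node `i` is selected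
with probability `w i / A`, and then its weight grows by one while the total weight grows to
`B = Ξ_t + 2t = A + ξ_t + 2`. Hence the expected new numerator is `w i + w i / A`, and the
expected new probability `w i (A + 1) / (A B)` falls short of `w i / A` by
`w i (B - A - 1) / (A B) = w i (ξ_t + 1) / (A B)`. -/

theorem sum_mul_add_ite_eq {ι : Type*} [DecidableEq ι] {V : Finset ι} {i : ι} (hi : i ∈ V)
    (w : ι → ℝ) (c : ℝ) :
    ∑ ℓ ∈ V, w ℓ * (c + if ℓ = i then 1 else 0) = (∑ ℓ ∈ V, w ℓ) * c + w i := by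
  simp only [mul_add, mul_ite, mul_one, mul_zero, sum_add_distrib, ← sum_mul,
    sum_ite_eq' V i w, if_pos hi]

theorem sum_div_mul_add_ite_div_sub {ι : Type*} [DecidableEq ι] {V : Finset ι} {i : ι}
    (hi : i ∈ V) (w : ι → ℝ) {A B : ℝ} (hw : ∑ ℓ ∈ V, w ℓ = A) (hA : A ≠ 0) (hB : B ≠ 0) :
    (∑ ℓ ∈ V, (w ℓ / A) * ((w i + if ℓ = i then 1 else 0) / B)) - w i / A
      = -(w i * (B - A - 1)) / (A * B) := by
  have hsum : ∑ ℓ ∈ V, (w ℓ / A) * ((w i + if ℓ = i then 1 else 0) / B)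
      = (A * w i + w i) / (A * B) := by
    simp only [div_mul_div_comm, ← sum_div, sum_mul_add_ite_eq hi, hw]
  rw [hsum]
  field_simp
  ring

theorem additive_fitness_expected_change_general
    {ι : Type*} [DecidableEq ι] (V : Finset ι) (D ξ : ι → ℝ) (ξt t : ℝ) (i : ι)
    (ht : 2 ≤ t) (hi : i ∈ V)
    (hξ : ∀ j ∈ V, 0 ≤ ξ j) (hξt : 0 ≤ ξt)
    (hdeg : ∑ j ∈ V, D j = 2 * (t - 1)) :
    (∑ ℓ ∈ V, ((ξ ℓ + D ℓ) / ((∑ j ∈ V, ξ j) + 2 * (t - 1))) *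
        ((ξ i + D i + (if ℓ = i then (1:ℝ) else 0)) / ((∑ j ∈ V, ξ j) + ξt + 2 * t)))
      - (ξ i + D i) / ((∑ j ∈ V, ξ j) + 2 * (t - 1))
    = - ((ξ i + D i) * (ξt + 1)) /
        (((∑ j ∈ V, ξ j) + 2 * (t - 1)) * (((∑ j ∈ V, ξ j) + ξt) + 2 * t)) := by
  have hΞ : 0 ≤ ∑ j ∈ V, ξ j := sum_nonneg hξ
  have hw : ∑ ℓ ∈ V, (ξ ℓ + D ℓ) = (∑ j ∈ V, ξ j) + 2 * (t - 1) := by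
    rw [sum_add_distrib, hdeg]
  rw [sum_div_mul_add_ite_div_sub hi (fun ℓ => ξ ℓ + D ℓ) hw (by linarith) (by linarith)]
  ring

/-- Additive fitness model: conditional on G_{t-1} and ξ_t, the expected change in
attachment probability of node i equals
−(ξ_i + D_{t-1}(i))(ξ_t + 1)/((Ξ_{t-1} + 2(t-1))(Ξ_t + 2t)), where
Ξ_{t-1} = ∑_{j ∈ V} ξ_j and Ξ_t = Ξ_{t-1} + ξ_t.  The expectation is a sum over
the selected node ℓ, chosen with probability (ξ_ℓ + D_{t-1}(ℓ))/(Ξ_{t-1}+2(t-1)). -/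
theorem additive_fitness_expected_change
    {ι : Type*} [DecidableEq ι] (V : Finset ι) (D ξ : ι → ℝ) (ξt t : ℝ) (i : ι)
    (ht : 2 ≤ t) (hi : i ∈ V)
    (hD : ∀ j ∈ V, 0 ≤ D j) (hξ : ∀ j ∈ V, 0 ≤ ξ j) (hξt : 0 ≤ ξt)
    (hdeg : ∑ j ∈ V, D j = 2 * (t - 1)) :
    (∑ ℓ ∈ V, ((ξ ℓ + D ℓ) / ((∑ j ∈ V, ξ j) + 2 * (t - 1))) *
        ((ξ i + D i + (if ℓ = i then (1:ℝ) else 0)) / ((∑ j ∈ V, ξ j) + ξt + 2 * t)))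
      - (ξ i + D i) / ((∑ j ∈ V, ξ j) + 2 * (t - 1))
    = - ((ξ i + D i) * (ξt + 1)) /
        (((∑ j ∈ V, ξ j) + 2 * (t - 1)) * (((∑ j ∈ V, ξ j) + ξt) + 2 * t)) :=
  additive_fitness_expected_change_general V D ξ ξt t i ht hi hξ hξt hdeg
end

section
/- In the multiplicative fitness model, conditional on G_{t-1} and ξ_t, the expected change in attachment probability of node i is bounded below: E[p_i^{MF}(t+1) − p_i^{MF}(t) | G_{t-1}, ξ_t] ≥ ξ_i [ ξ_i D_{t-1}(i) / (ψ_{t-1}(ψ_{t-1} + ξ_i + ξ_t)) − (D_{t-1}(i)/ψ_{t-1}) · ∑_{ℓ ∈ V_{t-1}} ξ_ℓ D_{t-1}(ℓ)(ξ_ℓ + ξ_t) / ψ_{t-1}² ], assuming all fitnesses are positive. -/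
/-!
Write `ψ = ∑ ξ_j D_j` and `a_ℓ = ξ_ℓ + ξ_t`. Only the term `ℓ = i` of the expectation sees the
extra `+1` in the degree of `i`; it gives exactly `ξ_i² D_i / (ψ (ψ + ξ_i + ξ_t))`. The rest is
`ξ_i D_i / ψ` times the average of `ψ / (ψ + a_ℓ)` under the attachment law, and the tangent line
`1 / (ψ + a) ≥ 1 / ψ - a / ψ²` of the convex function `x ↦ 1 / x` bounds that average below by
`1 - ∑ ξ_ℓ D_ℓ a_ℓ / ψ²`.
-/

open Finset

lemma inv_sub_div_sq_le_inv_add {S a : ℝ} (hS : 0 < S) (hSa : 0 < S + a) :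
    S⁻¹ - a / S ^ 2 ≤ (S + a)⁻¹ := by
  have key : (S - a) * (S + a) ≤ S ^ 2 := by nlinarith [sq_nonneg a]
  calc S⁻¹ - a / S ^ 2 = (S - a) / S ^ 2 := by field_simp
    _ ≤ (S + a)⁻¹ := by rw [div_le_iff₀ (by positivity), inv_mul_eq_div, le_div_iff₀ hSa]; exact key

lemma one_sub_sum_mul_div_sq_le_sum_div_add {ι : Type*} {V : Finset ι} {w a : ι → ℝ}
    (hw : ∀ ℓ ∈ V, 0 ≤ w ℓ) (hS : 0 < ∑ j ∈ V, w j)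
    (ha : ∀ ℓ ∈ V, 0 < (∑ j ∈ V, w j) + a ℓ) :
    1 - (∑ ℓ ∈ V, w ℓ * a ℓ) / (∑ j ∈ V, w j) ^ 2 ≤
      ∑ ℓ ∈ V, w ℓ / ((∑ j ∈ V, w j) + a ℓ) := by
  set S := ∑ j ∈ V, w j
  calc 1 - (∑ ℓ ∈ V, w ℓ * a ℓ) / S ^ 2 = ∑ ℓ ∈ V, w ℓ * (S⁻¹ - a ℓ / S ^ 2) := by
        simp only [mul_sub, sum_sub_distrib, ← sum_mul, mul_div_assoc', ← sum_div]
        rw [mul_inv_cancel₀ hS.ne']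
    _ ≤ ∑ ℓ ∈ V, w ℓ / (S + a ℓ) := by
        refine sum_le_sum fun ℓ hℓ => ?_
        rw [div_eq_mul_inv]
        exact mul_le_mul_of_nonneg_left (inv_sub_div_sq_le_inv_add hS (ha ℓ hℓ)) (hw ℓ hℓ)

/-- Multiplicative fitness model: conditional on G_{t-1} and ξ_t, the expected
change in attachment probability of node i is bounded below:
E[Δp_i] ≥ ξ_i [ ξ_i D_i/(ψ(ψ+ξ_i+ξ_t)) − (D_i/ψ)·∑_ℓ ξ_ℓ D_ℓ(ξ_ℓ+ξ_t)/ψ² ],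
where the expectation is a sum over the selected node ℓ, chosen with probability
ξ_ℓ D_ℓ/ψ, and ψ = ∑_{j∈V} ξ_j D_j > 0 with all fitnesses positive. -/
theorem multiplicative_fitness_expected_change_lower_bound
    {ι : Type*} [DecidableEq ι] (V : Finset ι) (D ξ : ι → ℝ) (ξt : ℝ) (i : ι)
    (hi : i ∈ V)
    (hD : ∀ j ∈ V, 0 ≤ D j) (hξ : ∀ j ∈ V, 0 < ξ j) (hξt : 0 < ξt)
    (hψ : 0 < ∑ j ∈ V, ξ j * D j) :
    (∑ ℓ ∈ V, (ξ ℓ * D ℓ / (∑ j ∈ V, ξ j * D j)) *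
        (ξ i * (D i + (if ℓ = i then (1:ℝ) else 0)) /
          ((∑ j ∈ V, ξ j * D j) + ξ ℓ + ξt)))
      - ξ i * D i / (∑ j ∈ V, ξ j * D j)
    ≥ ξ i * (ξ i * D i /
          ((∑ j ∈ V, ξ j * D j) * ((∑ j ∈ V, ξ j * D j) + ξ i + ξt))
        - (D i / (∑ j ∈ V, ξ j * D j)) *
          ((∑ ℓ ∈ V, ξ ℓ * D ℓ * (ξ ℓ + ξt)) / (∑ j ∈ V, ξ j * D j) ^ 2)) := by
  set S := ∑ j ∈ V, ξ j * D j
  have hw : ∀ ℓ ∈ V, 0 ≤ ξ ℓ * D ℓ := fun ℓ hℓ => mul_nonneg (hξ ℓ hℓ).le (hD ℓ hℓ)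
  have ha : ∀ ℓ ∈ V, 0 < S + (ξ ℓ + ξt) := fun ℓ hℓ => by linarith [hξ ℓ hℓ]
  have hsplit : ∑ ℓ ∈ V, (ξ ℓ * D ℓ / S) * (ξ i * (D i + (if ℓ = i then (1:ℝ) else 0)) /
        (S + ξ ℓ + ξt)) =
      ξ i * D i / S * ∑ ℓ ∈ V, ξ ℓ * D ℓ / (S + (ξ ℓ + ξt)) +
        ξ i * (ξ i * D i / (S * (S + ξ i + ξt))) := by
    simp only [mul_add, add_div, sum_add_distrib, mul_ite, mul_one, mul_zero, ite_div, zero_div,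
      sum_ite_eq', if_pos hi, mul_sum, ← add_assoc]
    congr 1
    · exact sum_congr rfl fun ℓ _ => by ring
    · field_simp
  have htangent : 1 - (∑ ℓ ∈ V, ξ ℓ * D ℓ * (ξ ℓ + ξt)) / S ^ 2 ≤
      ∑ ℓ ∈ V, ξ ℓ * D ℓ / (S + (ξ ℓ + ξt)) :=
    one_sub_sum_mul_div_sq_le_sum_div_add hw hψ ha
  have hcoef : 0 ≤ ξ i * D i / S := div_nonneg (hw i hi) hψ.le
  rw [hsplit, ge_iff_le]
  calc _ = ξ i * (ξ i * D i / (S * (S + ξ i + ξt))) +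
        ξ i * D i / S * (1 - (∑ ℓ ∈ V, ξ ℓ * D ℓ * (ξ ℓ + ξt)) / S ^ 2) - ξ i * D i / S := by ring
    _ ≤ _ := by linarith [mul_le_mul_of_nonneg_left htangent hcoef]
end
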